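/- arXiv:2001.11705 — 2 statements merged into one kernel-verified Lean document; each statement's English description precedes it below -/
import Mathlib

section
/- Let α, β ∈ (0,1) with α + β > 1, and let K₁, K₂ : ℤ² → [0,∞) be symmetric with K₁(m) ≤ C/(1+|m|²)^α, K₂(m) ≤ C/(1+|m|²)^β. For N ∈ ℕ set (K₂)_N(m) = K₂(m)·𝟙_{|m| ≤ N}. Then there exists C' = C'(α, β, C) such that |K₁ ⋆ K₂(m) − K₁ ⋆ (K₂)_N(m)| ≤ C'/(1 + max{|m|, N}²)^{α+β−1} for all m ∈ ℤ² and N ∈ ℕ. -/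
/-
Write `⟨r⟩ = (1 + r²)^(1/2)`, so that `K₁(m - l) K₂(l) ≤ C² ⟨m - l⟩^(-2α) ⟨l⟩^(-2β)`. The
difference of the two convolutions is the sum of these products over `|l| > N`. With
`M = max(|m|, N)`, every such `l` has `|l| < M/2` (then `|m - l| ≥ M/2`), or `2|m - l| < |l|`
(then `|l| ≥ M/2` and `|m - l| ≤ M`), or `|l| ≥ M/2` and `|m - l| ≥ |l|/2`. The first two
regions contribute `⟨M⟩^(-2α)` resp. `⟨M⟩^(-2β)` times a lattice ball sum
`∑_{|l| ≤ M} ⟨l⟩^(-2s) ≲ ⟨M⟩^(2-2s)` (`s < 1`), the third a lattice tail sum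
`∑_{|l| ≥ M/2} ⟨l⟩^(-2(α+β)) ≲ ⟨M⟩^(2-2(α+β))` (`α + β > 1`). Both lattice sums are estimated
on the square shells `max(|l₁|, |l₂|) = n`, which have at most `8n + 1` points; this reduces
them to one-dimensional sums of powers of `n + 1`, bounded by telescoping with Bernoulli's
inequality.
-/

/-- squared Euclidean norm of a lattice point of `ℤ²` -/
def latNormSq (m : ℤ × ℤ) : ℝ := (m.1 : ℝ) ^ 2 + (m.2 : ℝ) ^ 2

open Finset

lemma one_sub_rpow_le_one_sub_min_mul {p t : ℝ} (hp : 0 ≤ p) (ht0 : 0 ≤ t) (ht1 : t ≤ 1) :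
    (1 - t) ^ p ≤ 1 - min p 1 * t := by
  rcases le_total p 1 with hp1 | hp1
  · simpa [min_eq_left hp1, sub_eq_add_neg] using
      rpow_one_add_le_one_add_mul_self (s := -t) (by linarith) hp hp1
  · rw [min_eq_right hp1, one_mul]
    simpa using Real.rpow_le_rpow_of_exponent_ge' (by linarith) (by linarith) zero_le_one hp1

lemma min_mul_rpow_sub_one_le_rpow_sub_rpow {p x : ℝ} (hp : 0 ≤ p) (hx : 0 ≤ x) :
    min p 1 * (x + 1) ^ (p - 1) ≤ (x + 1) ^ p - x ^ p := by
  have hy : 0 < x + 1 := by linarith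
  have key := one_sub_rpow_le_one_sub_min_mul hp (t := 1 / (x + 1)) (by positivity)
    ((div_le_one hy).2 (by linarith))
  rw [one_sub_div hy.ne', add_sub_cancel_right, Real.div_rpow hx hy.le,
    div_le_iff₀ (by positivity)] at key
  rw [Real.rpow_sub_one hy.ne']
  linarith [key, show (1 - min p 1 * (1 / (x + 1))) * (x + 1) ^ p
    = (x + 1) ^ p - min p 1 * ((x + 1) ^ p / (x + 1)) by ring]

lemma sum_range_add_one_rpow_sub_one_le {p : ℝ} (hp : 0 < p) (n : ℕ) :
    ∑ k ∈ range n, ((k : ℝ) + 1) ^ (p - 1) ≤ (n : ℝ) ^ p / min p 1 := by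
  have hmin : 0 < min p 1 := lt_min hp one_pos
  rw [le_div_iff₀ hmin, sum_mul]
  calc ∑ k ∈ range n, ((k : ℝ) + 1) ^ (p - 1) * min p 1
      ≤ ∑ k ∈ range n, ((((k + 1 : ℕ) : ℝ)) ^ p - ((k : ℕ) : ℝ) ^ p) := by
        gcongr with k
        push_cast
        rw [mul_comm]
        exact min_mul_rpow_sub_one_le_rpow_sub_rpow hp.le k.cast_nonneg
    _ = (n : ℝ) ^ p := by
        rw [sum_range_sub (fun k : ℕ => ((k : ℝ)) ^ p)]
        simp [Real.zero_rpow hp.ne']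

lemma sub_one_mul_rpow_neg_le_rpow_sub_rpow {q y : ℝ} (hq : 1 ≤ q) (hy : 0 < y) :
    (q - 1) * (y + 1) ^ (-q) ≤ y ^ (1 - q) - (y + 1) ^ (1 - q) := by
  have hy1 : 0 < y + 1 := by linarith
  have key := one_add_mul_self_le_rpow_one_add (s := 1 / y) (by linarith [one_div_pos.2 hy]) hq
  rw [one_add_div hy.ne', Real.div_rpow hy1.le hy.le] at key
  have hA := Real.rpow_pos_of_pos hy q
  have hB := Real.rpow_pos_of_pos hy1 q
  rw [Real.rpow_neg hy1.le, Real.rpow_sub hy, Real.rpow_sub hy1, Real.rpow_one, Real.rpow_one]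
  rw [le_div_iff₀ hA] at key
  have key' := mul_le_mul_of_nonneg_right key hy.le
  rw [show (1 + q * (1 / y)) * y ^ q * y = (y + q) * y ^ q by field_simp] at key'
  field_simp
  linarith

lemma sum_Ico_add_one_rpow_neg_le {q : ℝ} (hq : 1 < q) (a b : ℕ) :
    ∑ k ∈ Ico a b, ((k : ℝ) + 1) ^ (-q) ≤ 2 ^ q / (q - 1) * ((a : ℝ) + 1) ^ (1 - q) := by
  have h2 : ∀ k : ℕ, ((k : ℝ) + 1) ^ (-q)
      ≤ 2 ^ q / (q - 1) * (((k : ℝ) + 1) ^ (1 - q) - ((k : ℝ) + 1 + 1) ^ (1 - q)) := by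
    intro k
    have hk : (0 : ℝ) < k + 1 := by positivity
    have hdouble : ((k : ℝ) + 1) ^ (-q) ≤ 2 ^ q * ((k : ℝ) + 1 + 1) ^ (-q) := by
      calc ((k : ℝ) + 1) ^ (-q) ≤ (((k : ℝ) + 1 + 1) / 2) ^ (-q) :=
            Real.rpow_le_rpow_of_nonpos (by positivity) (by linarith) (by linarith)
        _ = 2 ^ q * ((k : ℝ) + 1 + 1) ^ (-q) := by
            rw [Real.div_rpow (by positivity) zero_le_two, Real.rpow_neg zero_le_two,
              div_inv_eq_mul, mul_comm]
    rw [div_mul_eq_mul_div, le_div_iff₀ (by linarith)]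
    calc ((k : ℝ) + 1) ^ (-q) * (q - 1) ≤ 2 ^ q * ((q - 1) * ((k : ℝ) + 1 + 1) ^ (-q)) := by
          nlinarith
      _ ≤ _ := by
          gcongr
          exact sub_one_mul_rpow_neg_le_rpow_sub_rpow hq.le hk
  have htelescope : ∑ k ∈ Ico a b, (((k : ℝ) + 1) ^ (1 - q) - ((k : ℝ) + 1 + 1) ^ (1 - q))
      ≤ ((a : ℝ) + 1) ^ (1 - q) := by
    rcases le_total a b with hab | hab
    · have := Finset.sum_Ico_sub (fun k : ℕ => ((k : ℝ) + 1) ^ (1 - q)) hab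
      push_cast at this
      rw [sum_sub_distrib] at this ⊢
      linarith [Real.rpow_nonneg (by positivity : (0 : ℝ) ≤ b + 1) (1 - q)]
    · rw [Ico_eq_empty_of_le hab, sum_empty]
      positivity
  calc ∑ k ∈ Ico a b, ((k : ℝ) + 1) ^ (-q)
      ≤ ∑ k ∈ Ico a b, 2 ^ q / (q - 1) * (((k : ℝ) + 1) ^ (1 - q) - ((k : ℝ) + 1 + 1) ^ (1 - q)) :=
        sum_le_sum fun k _ => h2 k
    _ ≤ _ := by
        rw [← mul_sum]
        exact mul_le_mul_of_nonneg_left htelescope (div_nonneg (by positivity) (by linarith))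

lemma sum_ite_le_sum_of_imp_mem {H : ℕ → ℝ} (hH : ∀ n, 0 ≤ H n) {P : ℕ → Prop} [DecidablePred P]
    {s t : Finset ℕ} (hPt : ∀ n ∈ s, P n → n ∈ t) :
    ∑ n ∈ s, (if P n then H n else 0) ≤ ∑ n ∈ t, H n := by
  rw [← sum_filter]
  exact sum_le_sum_of_subset_of_nonneg (fun n hn => hPt n (mem_filter.1 hn).1 (mem_filter.1 hn).2)
    fun n _ _ => hH n

noncomputable def decayWeight (s r : ℝ) : ℝ := (1 + r ^ 2) ^ (-s)

lemma decayWeight_pos (s r : ℝ) : 0 < decayWeight s r := by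
  unfold decayWeight; positivity

lemma decayWeight_mul_decayWeight (a b r : ℝ) :
    decayWeight a r * decayWeight b r = decayWeight (a + b) r := by
  rw [decayWeight, decayWeight, decayWeight, ← Real.rpow_add (by positivity), neg_add]

lemma decayWeight_le_decayWeight {s r t : ℝ} (hs : 0 ≤ s) (hr : 0 ≤ r) (hrt : r ≤ t) :
    decayWeight s t ≤ decayWeight s r :=
  Real.rpow_le_rpow_of_nonpos (by positivity) (by nlinarith) (by linarith)

lemma decayWeight_le_four_rpow_mul {s r t : ℝ} (hs : 0 ≤ s) (ht : 0 ≤ t) (htr : t ≤ 2 * r) :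
    decayWeight s r ≤ 4 ^ s * decayWeight s t := by
  have h : (1 + t ^ 2) / 4 ≤ 1 + r ^ 2 := by nlinarith
  calc decayWeight s r ≤ ((1 + t ^ 2) / 4) ^ (-s) :=
        Real.rpow_le_rpow_of_nonpos (by positivity) h (by linarith)
    _ = 4 ^ s * decayWeight s t := by
        rw [Real.div_rpow (by positivity) (by norm_num), Real.rpow_neg (by norm_num : (0:ℝ) ≤ 4),
          div_inv_eq_mul, mul_comm, decayWeight]

lemma decayWeight_natCast_le {s : ℝ} (hs : 0 ≤ s) (n : ℕ) :
    decayWeight s n ≤ 2 ^ s * ((n : ℝ) + 1) ^ (-2 * s) := by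
  have h : ((n : ℝ) + 1) ^ 2 / 2 ≤ 1 + (n : ℝ) ^ 2 := by nlinarith [sq_nonneg ((n : ℝ) - 1)]
  calc decayWeight s n ≤ (((n : ℝ) + 1) ^ 2 / 2) ^ (-s) :=
        Real.rpow_le_rpow_of_nonpos (by positivity) h (by linarith)
    _ = 2 ^ s * ((n : ℝ) + 1) ^ (-2 * s) := by
        rw [Real.div_rpow (by positivity) (by norm_num), Real.rpow_neg (by norm_num : (0:ℝ) ≤ 2),
          div_inv_eq_mul, mul_comm, show -2 * s = 2 * -s by ring, Real.rpow_mul (by positivity),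
          Real.rpow_two]

lemma latNormSq_nonneg (l : ℤ × ℤ) : 0 ≤ latNormSq l := by
  unfold latNormSq; positivity

noncomputable def latNorm (l : ℤ × ℤ) : ℝ := √(latNormSq l)

lemma latNorm_nonneg (l : ℤ × ℤ) : 0 ≤ latNorm l := Real.sqrt_nonneg _

lemma sq_latNorm (l : ℤ × ℤ) : latNorm l ^ 2 = latNormSq l :=
  Real.sq_sqrt (latNormSq_nonneg l)

lemma div_one_add_latNormSq_rpow (C s : ℝ) (l : ℤ × ℤ) :
    C / (1 + latNormSq l) ^ s = C * decayWeight s (latNorm l) := by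
  rw [decayWeight, sq_latNorm, Real.rpow_neg (by linarith [latNormSq_nonneg l]), div_eq_mul_inv]

lemma latNorm_eq_norm_complex (l : ℤ × ℤ) : latNorm l = ‖(l.1 + l.2 * Complex.I : ℂ)‖ := by
  rw [latNorm, latNormSq, Complex.norm_def, Complex.normSq_apply]
  simp [sq]

lemma latNorm_add_le (a b : ℤ × ℤ) : latNorm (a + b) ≤ latNorm a + latNorm b := by
  simp only [latNorm_eq_norm_complex, Prod.fst_add, Prod.snd_add, Int.cast_add]
  exact (norm_add_le _ _).trans_eq' (by ring_nf)

lemma latNorm_neg (l : ℤ × ℤ) : latNorm (-l) = latNorm l := by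
  simp [latNorm, latNormSq]

lemma latNorm_le_sub_add (m l : ℤ × ℤ) : latNorm m ≤ latNorm (m - l) + latNorm l := by
  simpa using latNorm_add_le (m - l) l

lemma latNorm_le_add_sub (m l : ℤ × ℤ) : latNorm l ≤ latNorm m + latNorm (m - l) := by
  have h := latNorm_add_le m (l - m)
  rwa [add_sub_cancel, ← latNorm_neg (l - m), neg_sub] at h

lemma latNorm_mem_Icc_of_mem_box {n : ℕ} {l : ℤ × ℤ} (hl : l ∈ box n) :
    latNorm l ∈ Set.Icc (n : ℝ) (2 * n) := by
  rw [Int.mem_box] at hl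
  have hn : (n : ℝ) = max |(l.1 : ℝ)| |(l.2 : ℝ)| := by
    rw [← hl]; push_cast [Nat.cast_natAbs, Int.cast_abs]; rfl
  have hsq : latNormSq l = |(l.1 : ℝ)| ^ 2 + |(l.2 : ℝ)| ^ 2 := by simp [latNormSq]
  have h1 := le_max_left |(l.1 : ℝ)| |(l.2 : ℝ)|
  have h2 := le_max_right |(l.1 : ℝ)| |(l.2 : ℝ)|
  have hlow : (n : ℝ) ^ 2 ≤ latNormSq l := by
    rcases max_choice |(l.1 : ℝ)| |(l.2 : ℝ)| with h | h <;> rw [hsq, hn, h] <;>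
      nlinarith [sq_nonneg |(l.1 : ℝ)|, sq_nonneg |(l.2 : ℝ)|]
  rw [latNorm, Set.mem_Icc, Real.le_sqrt n.cast_nonneg (hlow.trans' (by positivity)),
    Real.sqrt_le_left (by positivity)]
  refine ⟨hlow, ?_⟩
  rw [hsq, hn]
  nlinarith [abs_nonneg (l.1 : ℝ), abs_nonneg (l.2 : ℝ)]

lemma card_box_le (n : ℕ) : (#(box n : Finset (ℤ × ℤ)) : ℝ) ≤ 8 * ((n : ℝ) + 1) := by
  rcases eq_or_ne n 0 with rfl | hn
  · simp
  · rw [Int.card_box hn]; push_cast; linarith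

lemma card_box_mul_decayWeight_le {s : ℝ} (hs : 0 ≤ s) (n : ℕ) :
    (#(box n : Finset (ℤ × ℤ)) : ℝ) * decayWeight s n
      ≤ 8 * 2 ^ s * ((n : ℝ) + 1) ^ (1 - 2 * s) := by
  have hn : (0 : ℝ) < n + 1 := by positivity
  calc (#(box n : Finset (ℤ × ℤ)) : ℝ) * decayWeight s n
      ≤ 8 * ((n : ℝ) + 1) * (2 ^ s * ((n : ℝ) + 1) ^ (-2 * s)) :=
        mul_le_mul (card_box_le n) (decayWeight_natCast_le hs n) (decayWeight_pos _ _).le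
          (by positivity)
    _ = 8 * 2 ^ s * ((n : ℝ) + 1) ^ (1 - 2 * s) := by
        rw [show 1 - 2 * s = -2 * s + 1 by ring, Real.rpow_add_one hn.ne']
        ring

lemma summable_and_tsum_le_of_le_on_box {f : ℤ × ℤ → ℝ} {g : ℕ → ℝ} {c : ℝ} (hf : 0 ≤ f)
    (hfg : ∀ n, ∀ l ∈ box n, f l ≤ g n)
    (hc : ∀ N, ∑ n ∈ range N, (#(box n : Finset (ℤ × ℤ)) : ℝ) * g n ≤ c) :
    Summable f ∧ ∑' l, f l ≤ c := by
  have hsum : ∀ u : Finset (ℤ × ℤ), ∑ l ∈ u, f l ≤ c := by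
    intro u
    set K := u.sup (fun l => max l.1.natAbs l.2.natAbs) + 1
    have hu : u ⊆ (range K).biUnion box := by
      intro l hl
      simpa [K, Int.mem_box, Nat.lt_succ_iff] using
        le_sup (f := fun l : ℤ × ℤ => max l.1.natAbs l.2.natAbs) hl
    have hdisj : ((range K : Finset ℕ) : Set ℕ).PairwiseDisjoint (box : ℕ → Finset (ℤ × ℤ)) := by
      intro i _ j _ hij
      simp only [Function.onFun, disjoint_left, Int.mem_box]
      intro l hi hj
      exact hij (hi.symm.trans hj)
    refine (sum_le_sum_of_subset_of_nonneg hu fun l _ _ => hf l).trans ?_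
    rw [sum_biUnion hdisj]
    refine (sum_le_sum fun n _ => ?_).trans (hc _)
    simpa using sum_le_card_nsmul _ _ _ (hfg n)
  exact ⟨summable_of_sum_le hf hsum, Real.tsum_le_of_sum_le hf hsum⟩

lemma sum_card_box_mul_decayWeight_ball_le {s R : ℝ} (hs0 : 0 ≤ s) (hs1 : s < 1) (hR : 0 ≤ R)
    (N : ℕ) :
    ∑ n ∈ range N, (#(box n : Finset (ℤ × ℤ)) : ℝ) * (if (n : ℝ) ≤ R then decayWeight s n else 0)
      ≤ 8 * 2 ^ s * 2 ^ (1 - s) / min (2 - 2 * s) 1 * decayWeight (s - 1) R := by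
  have hp : 0 < 2 - 2 * s := by linarith
  have hmin : 0 < min (2 - 2 * s) 1 := lt_min hp one_pos
  have hfloor : (⌊R⌋₊ : ℝ) + 1 ≤ R + 1 := by linarith [Nat.floor_le hR]
  calc ∑ n ∈ range N, (#(box n : Finset (ℤ × ℤ)) : ℝ) * (if (n : ℝ) ≤ R then decayWeight s n else 0)
      ≤ ∑ n ∈ range N,
          (if (n : ℝ) ≤ R then 8 * 2 ^ s * ((n : ℝ) + 1) ^ (2 - 2 * s - 1) else 0) := by
        gcongr with n
        split_ifs
        · rw [show 2 - 2 * s - 1 = 1 - 2 * s by ring]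
          exact card_box_mul_decayWeight_le hs0 n
        · simp
    _ ≤ ∑ n ∈ range (⌊R⌋₊ + 1), 8 * 2 ^ s * ((n : ℝ) + 1) ^ (2 - 2 * s - 1) :=
        sum_ite_le_sum_of_imp_mem (fun n => by positivity)
          (fun n _ hn => mem_range.2 (Nat.lt_succ_of_le (Nat.le_floor hn)))
    _ ≤ 8 * 2 ^ s * (((⌊R⌋₊ + 1 : ℕ) : ℝ) ^ (2 - 2 * s) / min (2 - 2 * s) 1) := by
        rw [← mul_sum]
        exact mul_le_mul_of_nonneg_left (sum_range_add_one_rpow_sub_one_le hp _) (by positivity)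
    _ ≤ 8 * 2 ^ s * ((R + 1) ^ (2 - 2 * s) / min (2 - 2 * s) 1) := by
        push_cast
        gcongr
    _ ≤ 8 * 2 ^ s * ((2 * (1 + R ^ 2)) ^ (1 - s) / min (2 - 2 * s) 1) := by
        rw [show 2 - 2 * s = 2 * (1 - s) by ring, Real.rpow_mul (by positivity), Real.rpow_two]
        gcongr
        nlinarith [sq_nonneg (R - 1)]
    _ = _ := by
        rw [Real.mul_rpow (by norm_num) (by positivity), decayWeight, neg_sub]
        ring

lemma sum_card_box_mul_decayWeight_tail_le {s R : ℝ} (hs : 1 < s) (hR : 0 ≤ R) (N : ℕ) :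
    ∑ n ∈ range N, (#(box n : Finset (ℤ × ℤ)) : ℝ) * (if R ≤ 2 * n then decayWeight s n else 0)
      ≤ 8 * 2 ^ s * (2 ^ (2 * s - 1) / (2 * s - 1 - 1)) * 4 ^ (s - 1) * decayWeight (s - 1) R := by
  have hq : 1 < 2 * s - 1 := by linarith
  have hceil : R / 2 ≤ ⌈R / 2⌉₊ := Nat.le_ceil _
  calc ∑ n ∈ range N, (#(box n : Finset (ℤ × ℤ)) : ℝ) * (if R ≤ 2 * n then decayWeight s n else 0)
      ≤ ∑ n ∈ range N,
          (if R ≤ 2 * n then 8 * 2 ^ s * ((n : ℝ) + 1) ^ (-(2 * s - 1)) else 0) := by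
        gcongr with n
        split_ifs
        · rw [show -(2 * s - 1) = 1 - 2 * s by ring]
          exact card_box_mul_decayWeight_le (by linarith) n
        · simp
    _ ≤ ∑ n ∈ Ico ⌈R / 2⌉₊ N, 8 * 2 ^ s * ((n : ℝ) + 1) ^ (-(2 * s - 1)) :=
        sum_ite_le_sum_of_imp_mem (fun n => by positivity) fun n hn hRn =>
          mem_Ico.2 ⟨Nat.ceil_le.2 (by linarith), mem_range.1 hn⟩
    _ ≤ 8 * 2 ^ s *
          (2 ^ (2 * s - 1) / (2 * s - 1 - 1) * ((⌈R / 2⌉₊ : ℝ) + 1) ^ (1 - (2 * s - 1))) := by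
        rw [← mul_sum]
        exact mul_le_mul_of_nonneg_left (sum_Ico_add_one_rpow_neg_le hq _ _) (by positivity)
    _ ≤ 8 * 2 ^ s * (2 ^ (2 * s - 1) / (2 * s - 1 - 1) * ((1 + R ^ 2) / 4) ^ (1 - s)) := by
        rw [show 1 - (2 * s - 1) = 2 * (1 - s) by ring, Real.rpow_mul (by positivity),
          Real.rpow_two]
        have hsq : (1 + R ^ 2) / 4 ≤ ((⌈R / 2⌉₊ : ℝ) + 1) ^ 2 := by nlinarith
        exact mul_le_mul_of_nonneg_left (mul_le_mul_of_nonneg_left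
          (Real.rpow_le_rpow_of_nonpos (by positivity) hsq (by linarith)) (by positivity))
          (by positivity)
    _ = _ := by
        rw [Real.div_rpow (by positivity) (by norm_num), decayWeight, neg_sub,
          show (4 : ℝ) ^ (s - 1) = ((4 : ℝ) ^ (1 - s))⁻¹ by
            rw [← Real.rpow_neg (by norm_num), neg_sub]]
        ring

noncomputable def ballWeight (s R : ℝ) (l : ℤ × ℤ) : ℝ :=
  if latNorm l ≤ R then decayWeight s (latNorm l) else 0

noncomputable def tailWeight (s R : ℝ) (l : ℤ × ℤ) : ℝ :=
  if R ≤ latNorm l then decayWeight s (latNorm l) else 0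

lemma ballWeight_nonneg (s R : ℝ) : 0 ≤ ballWeight s R := fun l => by
  unfold ballWeight; split_ifs <;> simp [(decayWeight_pos _ _).le]

lemma tailWeight_nonneg (s R : ℝ) : 0 ≤ tailWeight s R := fun l => by
  unfold tailWeight; split_ifs <;> simp [(decayWeight_pos _ _).le]

lemma exists_tsum_ballWeight_le {s : ℝ} (hs0 : 0 ≤ s) (hs1 : s < 1) :
    ∃ c > 0, ∀ R, 0 ≤ R →
      Summable (ballWeight s R) ∧ ∑' l, ballWeight s R l ≤ c * decayWeight (s - 1) R := by
  have hp : 0 < 2 - 2 * s := by linarith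
  refine ⟨_, by positivity, fun R hR => summable_and_tsum_le_of_le_on_box (ballWeight_nonneg s R)
    (fun n l hl => ?_) (sum_card_box_mul_decayWeight_ball_le hs0 hs1 hR)⟩
  obtain ⟨hnl, -⟩ := latNorm_mem_Icc_of_mem_box hl
  unfold ballWeight
  split_ifs with h h'
  · exact decayWeight_le_decayWeight hs0 n.cast_nonneg hnl
  · exact absurd (hnl.trans h) h'
  · exact (decayWeight_pos _ _).le
  · exact le_rfl

lemma exists_tsum_tailWeight_le {s : ℝ} (hs : 1 < s) :
    ∃ c > 0, ∀ R, 0 ≤ R →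
      Summable (tailWeight s R) ∧ ∑' l, tailWeight s R l ≤ c * decayWeight (s - 1) R := by
  have hq : 0 < 2 * s - 1 - 1 := by linarith
  refine ⟨_, by positivity, fun R hR => summable_and_tsum_le_of_le_on_box (tailWeight_nonneg s R)
    (fun n l hl => ?_) (sum_card_box_mul_decayWeight_tail_le hs hR)⟩
  obtain ⟨hnl, hln⟩ := latNorm_mem_Icc_of_mem_box hl
  unfold tailWeight
  split_ifs with h h'
  · exact decayWeight_le_decayWeight (by linarith) n.cast_nonneg hnl
  · exact absurd (h.trans hln) h'
  · exact (decayWeight_pos _ _).le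
  · exact le_rfl

noncomputable def convMajorant (α β M : ℝ) (m l : ℤ × ℤ) : ℝ :=
  4 ^ α * decayWeight α M * ballWeight β M l + 4 ^ β * decayWeight β M * ballWeight α M (m - l)
    + 4 ^ α * tailWeight (α + β) (M / 2) l

lemma convMajorant_nonneg (α β M : ℝ) (m l : ℤ × ℤ) :
    0 ≤ convMajorant α β M m l := by
  have h₄ : ∀ s : ℝ, (0 : ℝ) ≤ 4 ^ s := fun s => by positivity
  unfold convMajorant
  exact add_nonneg (add_nonneg
    (mul_nonneg (mul_nonneg (h₄ α) (decayWeight_pos α M).le) (ballWeight_nonneg β M l))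
    (mul_nonneg (mul_nonneg (h₄ β) (decayWeight_pos β M).le) (ballWeight_nonneg α M (m - l))))
    (mul_nonneg (h₄ α) (tailWeight_nonneg (α + β) (M / 2) l))

lemma decayWeight_mul_le_convMajorant {α β R : ℝ} (hα : 0 ≤ α) (hβ : 0 ≤ β) (hR : 0 ≤ R)
    {m l : ℤ × ℤ} (hl : R ≤ latNorm l) :
    decayWeight α (latNorm (m - l)) * decayWeight β (latNorm l)
      ≤ convMajorant α β (max (latNorm m) R) m l := by
  set M := max (latNorm m) R
  have hmM : latNorm m ≤ M := le_max_left _ _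
  have hRM : R ≤ M := le_max_right _ _
  have htri₁ := latNorm_le_sub_add m l
  have htri₂ := latNorm_le_add_sub m l
  have hwα := (decayWeight_pos α (latNorm (m - l))).le
  have hwβ := (decayWeight_pos β (latNorm l)).le
  have hball₁ := mul_nonneg (mul_nonneg (by positivity : (0 : ℝ) ≤ 4 ^ α)
    (decayWeight_pos α M).le) (ballWeight_nonneg β M l)
  have hball₂ := mul_nonneg (mul_nonneg (by positivity : (0 : ℝ) ≤ 4 ^ β)
    (decayWeight_pos β M).le) (ballWeight_nonneg α M (m - l))
  have htail := mul_nonneg (by positivity : (0 : ℝ) ≤ 4 ^ α) (tailWeight_nonneg (α + β) (M / 2) l)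
  unfold convMajorant
  by_cases hnear : latNorm l < M / 2
  · -- `R ≤ |l| < M/2` rules out `M = R`
    have hMm : M ≤ latNorm m := by
      rcases le_total R (latNorm m) with h | h
      · exact max_le le_rfl h
      · linarith [max_eq_right h]
    have hball : ballWeight β M l = decayWeight β (latNorm l) := if_pos (by linarith)
    have hfar := decayWeight_le_four_rpow_mul (r := latNorm (m - l)) (t := M) hα
      (by linarith) (by linarith)
    rw [hball]
    nlinarith
  by_cases hmid : 2 * latNorm (m - l) < latNorm l
  · have hball : ballWeight α M (m - l) = decayWeight α (latNorm (m - l)) := if_pos (by linarith)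
    have hfar := decayWeight_le_four_rpow_mul (r := latNorm l) (t := M) hβ
      (by linarith) (by linarith)
    rw [hball]
    nlinarith
  · have htail : tailWeight (α + β) (M / 2) l = decayWeight (α + β) (latNorm l) :=
      if_pos (by linarith)
    have hfar := decayWeight_le_four_rpow_mul (r := latNorm (m - l)) (t := latNorm l) hα
      (latNorm_nonneg l) (by linarith)
    rw [htail, ← decayWeight_mul_decayWeight]
    nlinarith

lemma exists_tsum_convMajorant_le {α β : ℝ} (hα₀ : 0 ≤ α) (hα₁ : α < 1) (hβ₀ : 0 ≤ β)
    (hβ₁ : β < 1) (hαβ : 1 < α + β) :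
    ∃ c > 0, ∀ (m : ℤ × ℤ) (M : ℝ), 0 ≤ M → Summable (convMajorant α β M m) ∧
      ∑' l, convMajorant α β M m l ≤ c * decayWeight (α + β - 1) M := by
  obtain ⟨cα, hcα, hα⟩ := exists_tsum_ballWeight_le hα₀ hα₁
  obtain ⟨cβ, hcβ, hβ⟩ := exists_tsum_ballWeight_le hβ₀ hβ₁
  obtain ⟨cγ, hcγ, hγ⟩ := exists_tsum_tailWeight_le hαβ
  refine ⟨4 ^ α * cβ + 4 ^ β * cα + 4 ^ α * cγ * 4 ^ (α + β - 1), by positivity,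
    fun m M hM => ?_⟩
  obtain ⟨hsα, hbα⟩ := hα M hM
  obtain ⟨hsβ, hbβ⟩ := hβ M hM
  obtain ⟨hsγ, hbγ⟩ := hγ (M / 2) (by positivity)
  have hsα' : Summable fun l => ballWeight α M (m - l) :=
    (Equiv.subLeft m).summable_iff.2 hsα
  have htsα' : ∑' l, ballWeight α M (m - l) = ∑' l, ballWeight α M l :=
    (Equiv.subLeft m).tsum_eq (ballWeight α M)
  have hhalf : decayWeight (α + β - 1) (M / 2) ≤ 4 ^ (α + β - 1) * decayWeight (α + β - 1) M :=
    decayWeight_le_four_rpow_mul (by linarith) hM (by linarith)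
  refine ⟨((hsβ.mul_left _).add (hsα'.mul_left _)).add (hsγ.mul_left _), ?_⟩
  unfold convMajorant
  rw [((hsβ.mul_left _).add (hsα'.mul_left _)).tsum_add (hsγ.mul_left _),
    (hsβ.mul_left _).tsum_add (hsα'.mul_left _), tsum_mul_left, tsum_mul_left, tsum_mul_left,
    htsα']
  have e₁ : decayWeight α M * decayWeight (β - 1) M = decayWeight (α + β - 1) M := by
    rw [decayWeight_mul_decayWeight]; ring_nf
  have e₂ : decayWeight β M * decayWeight (α - 1) M = decayWeight (α + β - 1) M := by
    rw [decayWeight_mul_decayWeight]; ring_nf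
  calc 4 ^ α * decayWeight α M * ∑' l, ballWeight β M l
        + 4 ^ β * decayWeight β M * ∑' l, ballWeight α M l
        + 4 ^ α * ∑' l, tailWeight (α + β) (M / 2) l
      ≤ 4 ^ α * decayWeight α M * (cβ * decayWeight (β - 1) M)
        + 4 ^ β * decayWeight β M * (cα * decayWeight (α - 1) M)
        + 4 ^ α * (cγ * (4 ^ (α + β - 1) * decayWeight (α + β - 1) M)) := by
        have := decayWeight_pos α M
        have := decayWeight_pos β M
        gcongr
        exact hbγ.trans (mul_le_mul_of_nonneg_left hhalf hcγ.le)
    _ = _ := by linear_combination (4 ^ α * cβ) * e₁ + (4 ^ β * cα) * e₂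

lemma kernel_mul_le_convMajorant {α β C R : ℝ} {K₁ K₂ : ℤ × ℤ → ℝ} (hα : 0 ≤ α) (hβ : 0 ≤ β)
    (hK₁0 : ∀ m, 0 ≤ K₁ m) (hK₂0 : ∀ m, 0 ≤ K₂ m)
    (hK₁ : ∀ m, K₁ m ≤ C / (1 + latNormSq m) ^ α) (hK₂ : ∀ m, K₂ m ≤ C / (1 + latNormSq m) ^ β)
    (hR : 0 ≤ R) {m l : ℤ × ℤ} (hl : R ≤ latNorm l) :
    K₁ (m - l) * K₂ l ≤ C ^ 2 * convMajorant α β (max (latNorm m) R) m l := by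
  calc K₁ (m - l) * K₂ l
      ≤ (C * decayWeight α (latNorm (m - l))) * (C * decayWeight β (latNorm l)) := by
        rw [← div_one_add_latNormSq_rpow, ← div_one_add_latNormSq_rpow]
        exact mul_le_mul (hK₁ _) (hK₂ l) (hK₂0 l) ((hK₁0 _).trans (hK₁ _))
    _ = C ^ 2 * (decayWeight α (latNorm (m - l)) * decayWeight β (latNorm l)) := by ring
    _ ≤ _ := mul_le_mul_of_nonneg_left (decayWeight_mul_le_convMajorant hα hβ hR hl) (sq_nonneg C)

lemma abs_tsum_mul_sub_tsum_mul_ite_le {ι : Type*} {f g h : ι → ℝ} (p : ι → Prop)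
    [DecidablePred p] (hfg : ∀ i, 0 ≤ f i * g i) (hs : Summable fun i => f i * g i)
    (hh : Summable h) (hfgh : ∀ i, ¬p i → f i * g i ≤ h i) (hh₀ : ∀ i, 0 ≤ h i) :
    |∑' i, f i * g i - ∑' i, f i * (if p i then g i else 0)| ≤ ∑' i, h i := by
  have hin : Summable fun i => if p i then f i * g i else 0 :=
    hs.of_nonneg_of_le (fun i => by split_ifs <;> simp [hfg]) (fun i => by split_ifs <;> simp [hfg])
  have hout : Summable fun i => if p i then 0 else f i * g i :=
    hs.of_nonneg_of_le (fun i => by split_ifs <;> simp [hfg]) (fun i => by split_ifs <;> simp [hfg])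
  have hsplit : ∑' i, f i * g i
      = ∑' i, (if p i then f i * g i else 0) + ∑' i, (if p i then 0 else f i * g i) := by
    rw [← hin.tsum_add hout]
    exact tsum_congr fun i => by split_ifs <;> simp
  simp_rw [mul_ite, mul_zero]
  rw [hsplit, add_sub_cancel_left,
    abs_of_nonneg (tsum_nonneg fun i => by split_ifs <;> simp [hfg])]
  exact hout.tsum_le_tsum (fun i => by split_ifs with hi; exacts [hh₀ i, hfgh i hi]) hh

theorem discrete_convolution_truncation_estimate_general
    (α β C : ℝ) (hα : α ∈ Set.Ioo (0:ℝ) 1) (hβ : β ∈ Set.Ioo (0:ℝ) 1)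
    (hαβ : 1 < α + β) (hC : 0 < C)
    (K₁ K₂ : ℤ × ℤ → ℝ)
    (hK₁0 : ∀ m, 0 ≤ K₁ m) (hK₂0 : ∀ m, 0 ≤ K₂ m)
    (hK₁ : ∀ m, K₁ m ≤ C / (1 + latNormSq m) ^ α)
    (hK₂ : ∀ m, K₂ m ≤ C / (1 + latNormSq m) ^ β) :
    ∃ C' : ℝ, 0 < C' ∧ ∀ (m : ℤ × ℤ) (N : ℕ),
      |(∑' l : ℤ × ℤ, K₁ (m - l) * K₂ l) -
        (∑' l : ℤ × ℤ, K₁ (m - l) * (if Real.sqrt (latNormSq l) ≤ N then K₂ l else 0))|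
        ≤ C' / (1 + (max (Real.sqrt (latNormSq m)) (N : ℝ)) ^ 2) ^ (α + β - 1) := by
  obtain ⟨c, hc, hmaj⟩ := exists_tsum_convMajorant_le hα.1.le hα.2 hβ.1.le hβ.2 hαβ
  refine ⟨C ^ 2 * c, by positivity, fun m N => ?_⟩
  have hP : ∀ R, 0 ≤ R → ∀ l, R ≤ latNorm l →
      K₁ (m - l) * K₂ l ≤ C ^ 2 * convMajorant α β (max (latNorm m) R) m l := fun R hR l hl =>
    kernel_mul_le_convMajorant hα.1.le hβ.1.le hK₁0 hK₂0 hK₁ hK₂ hR hl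
  obtain ⟨hs₀, -⟩ := hmaj m (max (latNorm m) 0) (le_max_right _ _)
  obtain ⟨hsN, hbN⟩ := hmaj m (max (latNorm m) N) (le_max_of_le_right N.cast_nonneg)
  have hP₀ : ∀ l, 0 ≤ K₁ (m - l) * K₂ l := fun l => mul_nonneg (hK₁0 _) (hK₂0 l)
  have hPs : Summable fun l => K₁ (m - l) * K₂ l :=
    (hs₀.mul_left (C ^ 2)).of_nonneg_of_le hP₀ fun l => hP 0 le_rfl l (latNorm_nonneg l)
  calc _ ≤ ∑' l, C ^ 2 * convMajorant α β (max (latNorm m) N) m l :=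
        abs_tsum_mul_sub_tsum_mul_ite_le (fun l => latNorm l ≤ N) hP₀ hPs (hsN.mul_left _)
          (fun l hl => hP N N.cast_nonneg l (not_le.1 hl).le)
          (fun l => mul_nonneg (sq_nonneg C) (convMajorant_nonneg _ _ _ _ _))
    _ ≤ C ^ 2 * (c * decayWeight (α + β - 1) (max (latNorm m) N)) := by
        rw [tsum_mul_left]; gcongr
    _ = _ := by
        unfold decayWeight latNorm
        rw [Real.rpow_neg (add_nonneg zero_le_one (sq_nonneg _)), div_eq_mul_inv]
        ring

/-- Lemma A.2, second part: estimate for the truncated convolution on `ℤ²`. -/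
theorem discrete_convolution_truncation_estimate
    (α β C : ℝ) (hα : α ∈ Set.Ioo (0:ℝ) 1) (hβ : β ∈ Set.Ioo (0:ℝ) 1)
    (hαβ : 1 < α + β) (hC : 0 < C)
    (K₁ K₂ : ℤ × ℤ → ℝ)
    (hK₁0 : ∀ m, 0 ≤ K₁ m) (hK₂0 : ∀ m, 0 ≤ K₂ m)
    (hK₁sym : ∀ m, K₁ (-m) = K₁ m) (hK₂sym : ∀ m, K₂ (-m) = K₂ m)
    (hK₁ : ∀ m, K₁ m ≤ C / (1 + latNormSq m) ^ α)
    (hK₂ : ∀ m, K₂ m ≤ C / (1 + latNormSq m) ^ β) :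
    ∃ C' : ℝ, 0 < C' ∧ ∀ (m : ℤ × ℤ) (N : ℕ),
      |(∑' l : ℤ × ℤ, K₁ (m - l) * K₂ l) -
        (∑' l : ℤ × ℤ, K₁ (m - l) * (if Real.sqrt (latNormSq l) ≤ N then K₂ l else 0))|
        ≤ C' / (1 + (max (Real.sqrt (latNormSq m)) (N : ℝ)) ^ 2) ^ (α + β - 1) :=
  discrete_convolution_truncation_estimate_general α β C hα hβ hαβ hC K₁ K₂ hK₁0 hK₂0 hK₁ hK₂
end

section
/- The complex Hermite polynomials H_{k,l}(z, c) := ∑_{m=0}^{min{k,l}} m! · binom(k,m) · binom(l,m) · (−c)^m · z^{k−m} · z̄^{l−m} satisfy, for all z, w ∈ ℂ and c ∈ ℝ, the binomial expansion H_{k,l}(z + w, c) = ∑_{p=0}^{k} ∑_{q=0}^{l} binom(k,p) binom(l,q) H_{p,q}(z, c) w^{k−p} w̄^{l−q}. -/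
/-!
Expanding `(z + w) ^ (k - m)` and its conjugate in each term of `H_{k,l}(z + w, c)` uses
`binom(k,m) (x + y)^(k-m) = ∑_p binom(k,p) binom(p,m) x^(p-m) y^(k-p)`, the `m`-th Hasse
derivative of `(x + y)^k` in `x`. After exchanging the sum over `m` with the sums over `p` and
`q`, the inner sum over `m` is exactly `H_{p,q}(z, c)`.
-/

open Finset

/-- the complex Hermite polynomials `H_{k,l}(z, c)` -/
noncomputable def complexHermite (k l : ℕ) (z : ℂ) (c : ℝ) : ℂ :=
  ∑ m ∈ Finset.range (min k l + 1),
    (Nat.factorial m : ℂ) * (Nat.choose k m : ℂ) * (Nat.choose l m : ℂ) *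
      (-(c : ℂ)) ^ m * z ^ (k - m) * (starRingEnd ℂ z) ^ (l - m)

theorem choose_mul_add_pow_sub {R : Type*} [CommSemiring R] (x y : R) (k m : ℕ) :
    (k.choose m : R) * (x + y) ^ (k - m) =
      ∑ p ∈ range (k + 1),
        x ^ (p - m) * y ^ (k - p) * ((k.choose p * p.choose m : ℕ) : R) := by
  obtain hkm | hmk := lt_or_ge k m
  · rw [Nat.choose_eq_zero_of_lt hkm, Nat.cast_zero, zero_mul]
    exact (sum_eq_zero fun p hp => by
      simp [Nat.choose_eq_zero_of_lt ((mem_range_succ_iff.1 hp).trans_lt hkm)]).symm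
  obtain ⟨n, rfl⟩ := Nat.exists_eq_add_of_le hmk
  have below : ∑ p ∈ range m,
      x ^ (p - m) * y ^ (m + n - p) * (((m + n).choose p * p.choose m : ℕ) : R) = 0 :=
    sum_eq_zero fun p hp => by simp [Nat.choose_eq_zero_of_lt (mem_range.1 hp)]
  rw [add_assoc, sum_range_add, below, zero_add, Nat.add_sub_cancel_left, add_pow, mul_sum]
  refine sum_congr rfl fun j _ => ?_
  rw [Nat.choose_mul (Nat.le_add_right m j)]
  simp only [Nat.add_sub_cancel_left, Nat.add_sub_add_left]
  push_cast
  ring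

theorem complexHermite_eq_sum_range {k l n : ℕ} (hn : min k l ≤ n) (z : ℂ) (c : ℝ) :
    complexHermite k l z c = ∑ m ∈ range (n + 1),
      (m.factorial : ℂ) * (k.choose m : ℂ) * (l.choose m : ℂ) *
        (-(c : ℂ)) ^ m * z ^ (k - m) * (starRingEnd ℂ z) ^ (l - m) := by
  refine sum_subset (range_subset_range.2 (by omega)) fun m _ hm => ?_
  rw [mem_range, not_lt, Nat.succ_le_iff] at hm
  obtain h | h := min_lt_iff.1 hm
  all_goals simp [Nat.choose_eq_zero_of_lt h]

theorem complexHermite_binomial_expansion (k l : ℕ) (z w : ℂ) (c : ℝ) :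
    complexHermite k l (z + w) c =
      ∑ p ∈ Finset.range (k + 1), ∑ q ∈ Finset.range (l + 1),
        (Nat.choose k p : ℂ) * (Nat.choose l q : ℂ) * complexHermite p q z c *
          w ^ (k - p) * (starRingEnd ℂ w) ^ (l - q) := by
  calc complexHermite k l (z + w) c
      = ∑ m ∈ range (k + 1), (m.factorial : ℂ) * (-(c : ℂ)) ^ m *
          ((k.choose m : ℂ) * (z + w) ^ (k - m)) *
          ((l.choose m : ℂ) * (starRingEnd ℂ z + starRingEnd ℂ w) ^ (l - m)) := by
        rw [complexHermite_eq_sum_range (min_le_left k l)]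
        simp only [map_add]
        exact sum_congr rfl fun m _ => by ring
    _ = ∑ m ∈ range (k + 1), ∑ p ∈ range (k + 1), ∑ q ∈ range (l + 1),
          (m.factorial : ℂ) * (-(c : ℂ)) ^ m *
          (z ^ (p - m) * w ^ (k - p) * ((k.choose p * p.choose m : ℕ) : ℂ)) *
          (starRingEnd ℂ z ^ (q - m) * starRingEnd ℂ w ^ (l - q) *
            ((l.choose q * q.choose m : ℕ) : ℂ)) := by
        refine sum_congr rfl fun m _ => ?_
        rw [choose_mul_add_pow_sub, choose_mul_add_pow_sub, mul_sum (range (k + 1)), sum_mul_sum]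
    _ = _ := by
        rw [sum_comm]
        refine sum_congr rfl fun p hp => ?_
        rw [sum_comm]
        refine sum_congr rfl fun q _ => ?_
        rw [complexHermite_eq_sum_range ((min_le_left p q).trans (mem_range_succ_iff.1 hp)),
          mul_sum, sum_mul, sum_mul]
        refine sum_congr rfl fun m _ => ?_
        push_cast
        ring
end
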